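/- Lemma on partial transpose of lattice states: for a vector i = (i₁,…,iₙ) ∈ {0,1,2,3}ⁿ, let S(i) = {(j₁,…,jₙ) : ⊕ₗ δ_{iₗ jₗ} = 1} (XOR of indicator bits equals 1). Then T_A(ψ_{i₁}⊗⋯⊗ψ_{iₙ}) = (1/2ⁿ)·(I − 2·Σ_{j∈S(i)} ψ_{f(j₁)}⊗⋯⊗ψ_{f(jₙ)}), where f(0)=2, f(1)=3, f(2)=0, f(3)=1. -/

import Mathlib

open Matrix

noncomputable def pauli : Fin 4 → Matrix (Fin 2) (Fin 2) ℂ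
  | 0 => 1
  | 1 => !![0, 1; 1, 0]
  | 2 => !![0, -Complex.I; Complex.I, 0]
  | 3 => !![1, 0; 0, -1]

/-- Density operator of the Bell state `|ψᵢ⟩ = (1 ⊗ σᵢ)|ψ₀⟩`,
`|ψ₀⟩ = (|00⟩+|11⟩)/√2`, as a matrix on `ℂ² ⊗ ℂ²`. -/
noncomputable def bell (i : Fin 4) :
    Matrix (Fin 2 × Fin 2) (Fin 2 × Fin 2) ℂ :=
  fun p q => (1 / 2 : ℂ) * pauli i p.2 p.1 * (starRingEnd ℂ) (pauli i q.2 q.1)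

/-- Partial transpose on the first tensor factor. -/
def PT {d : ℕ} (X : Matrix (Fin d × Fin d) (Fin d × Fin d) ℂ) :
    Matrix (Fin d × Fin d) (Fin d × Fin d) ℂ :=
  fun p q => X (q.1, p.2) (p.1, q.2)

/-- `n`-fold tensor product of Bell density operators. -/
noncomputable def nBell {n : ℕ} (i : Fin n → Fin 4) :
    Matrix (Fin n → Fin 2 × Fin 2) (Fin n → Fin 2 × Fin 2) ℂ :=
  fun p q => ∏ l, bell (i l) (p l) (q l)

/-- Partial transpose acting factorwise on all `n` Alice qubits. -/
def PTn {n : ℕ} (X : Matrix (Fin n → Fin 2 × Fin 2) (Fin n → Fin 2 × Fin 2) ℂ) :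
    Matrix (Fin n → Fin 2 × Fin 2) (Fin n → Fin 2 × Fin 2) ℂ :=
  fun p q => X (fun l => ((q l).1, (p l).2)) (fun l => ((p l).1, (q l).2))

/-- The bijection describing the action of the partial transpose on Bell states. -/
def f : Fin 4 → Fin 4
  | 0 => 2
  | 1 => 3
  | 2 => 0
  | 3 => 1

/-!
Each Bell state is mapped by the single-qubit partial transpose to `I/2 - ψ_{f(i)}`, and since
`∑ₖ ψ_{f(k)} = I` this is `∑ₖ ½ (-1)^{[i = k]} ψ_{f(k)}`. Expanding the tensor product of these
sums over all index vectors `j` gives the coefficient `2⁻ⁿ (-1)^{#{l | iₗ = jₗ}}` in front of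
`ψ_{f(j₁)} ⊗ ⋯ ⊗ ψ_{f(jₙ)}`, and the same expansion of `I = ⊗ₗ ∑ₖ ψ_{f(k)}` turns the signed sum
into `I - 2 ∑_{j ∈ S(i)} ψ_{f(j)}`.
-/

section PiKronecker

variable {ι m κ R : Type*} [Fintype ι] [CommSemiring R]

def piKronecker (A : ι → Matrix m m R) : Matrix (ι → m) (ι → m) R :=
  fun p q => ∏ l, A l (p l) (q l)

theorem piKronecker_one [DecidableEq m] :
    piKronecker (fun _ : ι => (1 : Matrix m m R)) = 1 := by
  ext p q
  by_cases hpq : p = q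
  · subst hpq
    simp [piKronecker]
  · obtain ⟨l, hl⟩ := Function.ne_iff.mp hpq
    simp only [piKronecker, one_apply, hpq, if_false]
    exact Finset.prod_eq_zero (Finset.mem_univ l) (if_neg hl)

theorem piKronecker_smul (c : ι → R) (A : ι → Matrix m m R) :
    piKronecker (fun l => c l • A l) = (∏ l, c l) • piKronecker A := by
  ext p q
  simp [piKronecker, Finset.prod_mul_distrib]

theorem piKronecker_sum [DecidableEq ι] [Fintype κ] (B : ι → κ → Matrix m m R) :
    piKronecker (fun l => ∑ k, B l k) = ∑ j : ι → κ, piKronecker (fun l => B l (j l)) := by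
  ext p q
  simp only [piKronecker, Matrix.sum_apply, Finset.prod_univ_sum, Fintype.piFinset_univ]

end PiKronecker

theorem nBell_eq_piKronecker {n : ℕ} (i : Fin n → Fin 4) :
    nBell i = piKronecker (fun l => bell (i l)) := rfl

theorem PTn_piKronecker {n : ℕ} (A : Fin n → Matrix (Fin 2 × Fin 2) (Fin 2 × Fin 2) ℂ) :
    PTn (piKronecker A) = piKronecker (fun l => PT (A l)) := rfl

theorem sum_neg_one_pow_smul {α R M : Type*} [Fintype α] [CommRing R] [AddCommGroup M]
    [Module R M] (g : α → ℕ) (X : α → M) :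
    ∑ j, (-1 : R) ^ g j • X j = ∑ j, X j - (2 : R) • ∑ j ∈ Finset.univ.filter
      (fun j => g j % 2 = 1), X j := by
  rw [Finset.sum_filter, Finset.smul_sum, ← Finset.sum_sub_distrib]
  refine Finset.sum_congr rfl fun j _ => ?_
  rw [neg_one_pow_eq_pow_mod_two]
  by_cases h : g j % 2 = 1
  · rw [h, if_pos rfl]
    module
  · rw [Nat.mod_two_ne_one.mp h, if_neg zero_ne_one]
    module

theorem sum_bell : ∑ k, bell k = 1 := by
  ext ⟨a₁, a₂⟩ ⟨b₁, b₂⟩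
  fin_cases a₁ <;> fin_cases a₂ <;> fin_cases b₁ <;> fin_cases b₂ <;>
    simp [bell, pauli, Fin.sum_univ_four, Complex.ext_iff] <;> norm_num

theorem f_involutive : Function.Involutive f := by
  intro k
  fin_cases k <;> rfl

theorem sum_bell_f : ∑ k, bell (f k) = 1 :=
  (Equiv.sum_comp f_involutive.toPerm bell).trans sum_bell

theorem PT_bell (i : Fin 4) : PT (bell i) = (1 / 2 : ℂ) • 1 - bell (f i) := by
  ext ⟨a₁, a₂⟩ ⟨b₁, b₂⟩
  fin_cases i <;> fin_cases a₁ <;> fin_cases a₂ <;> fin_cases b₁ <;> fin_cases b₂ <;>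
    simp [PT, bell, pauli, f, Complex.ext_iff]

theorem PT_bell_eq_sum (i : Fin 4) :
    PT (bell i) = ∑ k, ((1 / 2 : ℂ) * (-1) ^ (if i = k then 1 else 0)) • bell (f k) := by
  have hcoeff : ∀ k, ((1 / 2 : ℂ) * (-1) ^ (if i = k then 1 else 0)) • bell (f k)
      = (1 / 2 : ℂ) • bell (f k) - if i = k then bell (f k) else 0 := by
    intro k
    split_ifs <;> module
  rw [PT_bell, Finset.sum_congr rfl fun k _ => hcoeff k, Finset.sum_sub_distrib,
    ← Finset.smul_sum, sum_bell_f, Finset.sum_ite_eq]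
  simp

/-- Partial transpose of a lattice state: `T_A(ψ_{i₁}⊗⋯⊗ψ_{iₙ}) =
(1/2ⁿ)(1 − 2 Σ_{j ∈ S(i)} ψ_{f(j₁)}⊗⋯⊗ψ_{f(jₙ)})`, where `S(i)` is the set of
index vectors `j` whose agreement pattern with `i` has odd parity. -/
theorem partial_transpose_lattice {n : ℕ} (i : Fin n → Fin 4) :
    PTn (nBell i) = (1 / 2 ^ n : ℂ) •
      ((1 : Matrix (Fin n → Fin 2 × Fin 2) (Fin n → Fin 2 × Fin 2) ℂ) -
        (2 : ℂ) • ∑ j ∈ Finset.univ.filter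
          (fun j : Fin n → Fin 4 => (∑ l, if i l = j l then 1 else 0) % 2 = 1),
          nBell (fun l => f (j l))) := by
  have hexpand : PTn (nBell i) = ∑ j : Fin n → Fin 4, ((1 / 2 ^ n : ℂ) *
      (-1) ^ (∑ l, if i l = j l then 1 else 0)) • nBell (fun l => f (j l)) := by
    simp only [nBell_eq_piKronecker, PTn_piKronecker, PT_bell_eq_sum, piKronecker_sum,
      piKronecker_smul, Finset.prod_mul_distrib, Finset.prod_const, Finset.card_univ,
      Fintype.card_fin, Finset.prod_pow_eq_pow_sum, one_div, inv_pow]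
  have hone : ∑ j : Fin n → Fin 4, nBell (fun l => f (j l)) = 1 := by
    simp only [nBell_eq_piKronecker]
    rw [← piKronecker_sum (fun _ k => bell (f k)), sum_bell_f, piKronecker_one]
  rw [hexpand, ← hone, ← sum_neg_one_pow_smul, Finset.smul_sum]
  simp only [smul_smul]
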